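/- Let (Ω, 𝔽, P) be a probability space and ε : Ω → ℝ^m a random vector with E[εᵢ] = 0 for all i and E[εᵢ εⱼ] = σ² if i = j and 0 otherwise, for some σ ≥ 0. Let H be a fixed real m × p matrix, λ > 0, θ* ∈ ℝ^p, y = Hθ* + ε, and θ̂ = (HᵀH + λI)⁻¹ Hᵀ y. Then E[‖θ̂ − θ*‖₂²] ≤ σ² tr((HᵀH + λI)⁻¹) + λ² ‖θ*‖₂² ‖(HᵀH + λI)⁻¹‖₂². -/

import Mathlib

open Matrix MeasureTheory
open scoped Matrix.Norms.L2Operator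

/-! With `A = HᵀH + λ1`, the estimation error is `θ̂ - θ* = A⁻¹Hᵀ ε - λA⁻¹ θ*`, a centred noise
term plus a deterministic bias. Because `ε` is centred the cross term has mean zero, and because
its covariance is `σ²1` the noise term has mean square `σ² tr(A⁻¹HᵀHA⁻¹) = σ² tr(A⁻¹ - λA⁻²)`,
which is at most `σ² tr A⁻¹`. The bias is bounded through the operator norm of `λA⁻¹`. -/

section IsotropicNoise

variable {Ω ι : Type*} [MeasurableSpace Ω] {μ : Measure Ω} [Fintype ι]
  {ε : Ω → ι → ℝ} {σ : ℝ}

lemma dotProduct_sq_eq_sum_sum (b x : ι → ℝ) :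
    (b ⬝ᵥ x) ^ 2 = ∑ k, ∑ l, b k * b l * (x k * x l) := by
  rw [sq, dotProduct, Finset.sum_mul_sum]
  exact Finset.sum_congr rfl fun k _ => Finset.sum_congr rfl fun l _ => by ring

lemma integrable_dotProduct (hint : ∀ i, Integrable (fun ω => ε ω i) μ) (b : ι → ℝ) :
    Integrable (fun ω => b ⬝ᵥ ε ω) μ :=
  integrable_finsetSum _ fun k _ => (hint k).const_mul (b k)

lemma integral_dotProduct_eq_zero (hint : ∀ i, Integrable (fun ω => ε ω i) μ)
    (hmean : ∀ i, ∫ ω, ε ω i ∂μ = 0) (b : ι → ℝ) :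
    ∫ ω, b ⬝ᵥ ε ω ∂μ = 0 := by
  simp only [dotProduct]
  rw [integral_finsetSum _ fun k _ => (hint k).const_mul (b k)]
  simp [integral_const_mul, hmean]

lemma integrable_dotProduct_sq (hint2 : ∀ i j, Integrable (fun ω => ε ω i * ε ω j) μ)
    (b : ι → ℝ) : Integrable (fun ω => (b ⬝ᵥ ε ω) ^ 2) μ := by
  simp_rw [dotProduct_sq_eq_sum_sum]
  exact integrable_finsetSum _ fun k _ => integrable_finsetSum _ fun l _ =>
    (hint2 k l).const_mul _

lemma integral_dotProduct_sq [DecidableEq ι]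
    (hint2 : ∀ i j, Integrable (fun ω => ε ω i * ε ω j) μ)
    (hcov : ∀ i j, ∫ ω, ε ω i * ε ω j ∂μ = if i = j then σ ^ 2 else 0) (b : ι → ℝ) :
    ∫ ω, (b ⬝ᵥ ε ω) ^ 2 ∂μ = σ ^ 2 * b ⬝ᵥ b := by
  simp_rw [dotProduct_sq_eq_sum_sum]
  rw [integral_finsetSum _ fun k _ => integrable_finsetSum _ fun l _ =>
    (hint2 k l).const_mul _]
  simp_rw [integral_finsetSum _ fun l _ => (hint2 _ l).const_mul _]
  simp only [integral_const_mul, hcov, mul_ite, mul_zero, Finset.sum_ite_eq, Finset.mem_univ,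
    if_true, dotProduct, Finset.mul_sum]
  exact Finset.sum_congr rfl fun k _ => by ring

variable [IsProbabilityMeasure μ]

lemma integral_sq_dotProduct_sub [DecidableEq ι] (hint : ∀ i, Integrable (fun ω => ε ω i) μ)
    (hmean : ∀ i, ∫ ω, ε ω i ∂μ = 0) (hint2 : ∀ i j, Integrable (fun ω => ε ω i * ε ω j) μ)
    (hcov : ∀ i j, ∫ ω, ε ω i * ε ω j ∂μ = if i = j then σ ^ 2 else 0) (b : ι → ℝ) (c : ℝ) :
    ∫ ω, (b ⬝ᵥ ε ω - c) ^ 2 ∂μ = σ ^ 2 * b ⬝ᵥ b + c ^ 2 := by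
  have hexpand : (fun ω => (b ⬝ᵥ ε ω - c) ^ 2) =
      fun ω => (b ⬝ᵥ ε ω) ^ 2 - 2 * c * b ⬝ᵥ ε ω + c ^ 2 := by
    funext ω; ring
  have hlin := (integrable_dotProduct hint b).const_mul (2 * c)
  have hquad : Integrable (fun ω => (b ⬝ᵥ ε ω) ^ 2 - 2 * c * b ⬝ᵥ ε ω) μ :=
    (integrable_dotProduct_sq hint2 b).sub hlin
  rw [hexpand, integral_add hquad (integrable_const _),
    integral_sub (integrable_dotProduct_sq hint2 b) hlin, integral_const_mul,
    integral_dotProduct_sq hint2 hcov, integral_dotProduct_eq_zero hint hmean]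
  simp

lemma integrable_sq_dotProduct_sub (hint : ∀ i, Integrable (fun ω => ε ω i) μ)
    (hint2 : ∀ i j, Integrable (fun ω => ε ω i * ε ω j) μ) (b : ι → ℝ) (c : ℝ) :
    Integrable (fun ω => (b ⬝ᵥ ε ω - c) ^ 2) μ := by
  refine (((integrable_dotProduct_sq hint2 b).sub
    ((integrable_dotProduct hint b).const_mul (2 * c))).add (integrable_const (c ^ 2))).congr
    (ae_of_all _ fun ω => ?_)
  simp only [Pi.add_apply, Pi.sub_apply]
  ring

lemma integral_sum_sq_mulVec_sub [DecidableEq ι] {κ : Type*} [Fintype κ]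
    (hint : ∀ i, Integrable (fun ω => ε ω i) μ)
    (hmean : ∀ i, ∫ ω, ε ω i ∂μ = 0) (hint2 : ∀ i j, Integrable (fun ω => ε ω i * ε ω j) μ)
    (hcov : ∀ i j, ∫ ω, ε ω i * ε ω j ∂μ = if i = j then σ ^ 2 else 0)
    (B : Matrix κ ι ℝ) (c : κ → ℝ) :
    ∫ ω, ∑ i, ((B *ᵥ ε ω) i - c i) ^ 2 ∂μ = σ ^ 2 * (B * Bᵀ).trace + ∑ i, c i ^ 2 := by
  change ∫ ω, ∑ i, (B i ⬝ᵥ ε ω - c i) ^ 2 ∂μ = _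
  rw [integral_finsetSum _ fun i _ => integrable_sq_dotProduct_sub hint hint2 (B i) (c i)]
  simp only [integral_sq_dotProduct_sub hint hmean hint2 hcov, Finset.sum_add_distrib,
    ← Finset.mul_sum]
  rfl

end IsotropicNoise

section RidgeAlgebra

variable {R m p : Type*} [CommRing R] [Fintype m] [Fintype p] [DecidableEq p]
  (H : Matrix m p R) (lam : R)

lemma ridge_mulVec_sub_eq (hA : IsUnit (Hᵀ * H + lam • (1 : Matrix p p R)).det)
    (θ : p → R) (e : m → R) :
    (Hᵀ * H + lam • 1)⁻¹ *ᵥ (Hᵀ *ᵥ (H *ᵥ θ + e)) - θ =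
      ((Hᵀ * H + lam • 1)⁻¹ * Hᵀ) *ᵥ e - (lam • (Hᵀ * H + lam • 1)⁻¹) *ᵥ θ := by
  set A := Hᵀ * H + lam • (1 : Matrix p p R) with hAdef
  have hbias : A⁻¹ *ᵥ (Hᵀ *ᵥ (H *ᵥ θ)) = θ - (lam • A⁻¹) *ᵥ θ := by
    rw [mulVec_mulVec, mulVec_mulVec, Matrix.mul_assoc, eq_sub_of_add_eq hAdef.symm,
      Matrix.mul_sub, nonsing_inv_mul A hA, Matrix.mul_smul, Matrix.mul_one, sub_mulVec,
      one_mulVec]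
  rw [mulVec_add, mulVec_add, hbias, mulVec_mulVec]
  abel

lemma ridge_mul_transpose_eq (hA : IsUnit (Hᵀ * H + lam • (1 : Matrix p p R)).det) :
    ((Hᵀ * H + lam • 1)⁻¹ * Hᵀ) * ((Hᵀ * H + lam • 1)⁻¹ * Hᵀ)ᵀ =
      (Hᵀ * H + lam • 1)⁻¹ - lam • ((Hᵀ * H + lam • 1)⁻¹ * (Hᵀ * H + lam • 1)⁻¹) := by
  set A := Hᵀ * H + lam • (1 : Matrix p p R) with hAdef
  have hAT : Aᵀ = A := by simp [hAdef, transpose_add, transpose_mul]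
  rw [transpose_mul, transpose_nonsing_inv, hAT, transpose_transpose,
    show A⁻¹ * Hᵀ * (H * A⁻¹) = A⁻¹ * (Hᵀ * H) * A⁻¹ by simp only [Matrix.mul_assoc],
    eq_sub_of_add_eq hAdef.symm, Matrix.mul_sub, nonsing_inv_mul A hA,
    Matrix.mul_smul, Matrix.mul_one, Matrix.sub_mul, Matrix.one_mul, Matrix.smul_mul]

end RidgeAlgebra

section RidgeReal

variable {m p : Type*} [Fintype m] [Fintype p] [DecidableEq p] (H : Matrix m p ℝ) {lam : ℝ}

lemma posDef_transpose_mul_self_add_smul_one (hlam : 0 < lam) :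
    (Hᵀ * H + lam • (1 : Matrix p p ℝ)).PosDef :=
  PosDef.posSemidef_add (by simpa using posSemidef_conjTranspose_mul_self H)
    (PosDef.one.smul hlam)

lemma trace_ridge_mul_transpose_le (hlam : 0 < lam) :
    (((Hᵀ * H + lam • 1)⁻¹ * Hᵀ) * ((Hᵀ * H + lam • (1 : Matrix p p ℝ))⁻¹ * Hᵀ)ᵀ).trace ≤
      (Hᵀ * H + lam • 1)⁻¹.trace := by
  have hA := posDef_transpose_mul_self_add_smul_one H hlam
  have hsq : 0 ≤ ((Hᵀ * H + lam • 1)⁻¹ * (Hᵀ * H + lam • (1 : Matrix p p ℝ))⁻¹).trace := by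
    have := (posSemidef_self_mul_conjTranspose (Hᵀ * H + lam • (1 : Matrix p p ℝ))⁻¹).trace_nonneg
    rwa [hA.inv.isHermitian.eq] at this
  rw [ridge_mul_transpose_eq H lam hA.det_pos.ne'.isUnit, trace_sub, trace_smul, smul_eq_mul]
  exact sub_le_self _ (mul_nonneg hlam.le hsq)

end RidgeReal

lemma sum_sq_mulVec_le {m n : Type*} [Fintype m] [Fintype n] [DecidableEq n]
    (M : Matrix m n ℝ) (v : n → ℝ) :
    ∑ i, (M *ᵥ v) i ^ 2 ≤ ‖M‖ ^ 2 * ∑ j, v j ^ 2 := by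
  have hop := l2_opNorm_mulVec M (WithLp.toLp 2 v)
  rw [← sq_le_sq₀ (norm_nonneg _) (by positivity), mul_pow, EuclideanSpace.real_norm_sq_eq,
    EuclideanSpace.real_norm_sq_eq] at hop
  simpa using hop

theorem stmt_8_general {Ω : Type*} [MeasurableSpace Ω] (μ : Measure Ω) [IsProbabilityMeasure μ]
    {m p : ℕ} (ε : Ω → Fin m → ℝ) (σ : ℝ)
    (hint : ∀ i : Fin m, Integrable (fun ω => ε ω i) μ)
    (hmean : ∀ i : Fin m, ∫ ω, ε ω i ∂μ = 0)
    (hint2 : ∀ i j : Fin m, Integrable (fun ω => ε ω i * ε ω j) μ)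
    (hcov : ∀ i j : Fin m, ∫ ω, ε ω i * ε ω j ∂μ = if i = j then σ ^ 2 else 0)
    (H : Matrix (Fin m) (Fin p) ℝ) (lam : ℝ) (hlam : 0 < lam) (θs : Fin p → ℝ)
    (y : Ω → Fin m → ℝ) (hy : ∀ ω, y ω = H *ᵥ θs + ε ω)
    (θhat : Ω → Fin p → ℝ)
    (hθhat : ∀ ω, θhat ω = (Hᵀ * H + lam • (1 : Matrix (Fin p) (Fin p) ℝ))⁻¹ *ᵥ (Hᵀ *ᵥ y ω)) :
    (∫ ω, ∑ i : Fin p, (θhat ω i - θs i) ^ 2 ∂μ) ≤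
      σ ^ 2 * ((Hᵀ * H + lam • (1 : Matrix (Fin p) (Fin p) ℝ))⁻¹).trace +
        lam ^ 2 * (∑ i : Fin p, θs i ^ 2) *
          ‖(Hᵀ * H + lam • (1 : Matrix (Fin p) (Fin p) ℝ))⁻¹‖ ^ 2 := by
  set A := Hᵀ * H + lam • (1 : Matrix (Fin p) (Fin p) ℝ)
  have hA := (posDef_transpose_mul_self_add_smul_one H hlam).det_pos.ne'.isUnit
  have herror : ∀ ω, θhat ω - θs = (A⁻¹ * Hᵀ) *ᵥ ε ω - (lam • A⁻¹) *ᵥ θs := fun ω => by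
    rw [hθhat, hy]
    exact ridge_mulVec_sub_eq H lam hA θs (ε ω)
  have hmse : ∫ ω, ∑ i, (θhat ω i - θs i) ^ 2 ∂μ =
      σ ^ 2 * ((A⁻¹ * Hᵀ) * (A⁻¹ * Hᵀ)ᵀ).trace + ∑ i, ((lam • A⁻¹) *ᵥ θs) i ^ 2 := by
    simp_rw [← Pi.sub_apply (θhat _), herror]
    exact integral_sum_sq_mulVec_sub hint hmean hint2 hcov _ _
  have hbias := sum_sq_mulVec_le (lam • A⁻¹) θs
  rw [norm_smul, Real.norm_eq_abs, mul_pow, sq_abs] at hbias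
  rw [hmse]
  gcongr ?_ + ?_
  · exact mul_le_mul_of_nonneg_left (trace_ridge_mul_transpose_le H hlam) (sq_nonneg σ)
  · linarith

/-- Mean-squared-error bound for the ridge estimator (Proposition A.3): in the linear-noise
model `y = H θ* + ε` with mean-zero, uncorrelated noise of variance `σ²`, the closed-form ridge
estimator `θ̂ = (Hᵀ H + lam • 1)⁻¹ Hᵀ y` satisfies
`E[‖θ̂ - θ*‖₂²] ≤ σ² tr((Hᵀ H + lam • 1)⁻¹) + lam² ‖θ*‖₂² ‖(Hᵀ H + lam • 1)⁻¹‖₂²`,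
where the matrix norm is the operator norm induced by the Euclidean norm. -/
theorem stmt_8 {Ω : Type*} [MeasurableSpace Ω] (μ : Measure Ω) [IsProbabilityMeasure μ]
    {m p : ℕ} (ε : Ω → Fin m → ℝ) (σ : ℝ) (hσ : 0 ≤ σ)
    (hint : ∀ i : Fin m, Integrable (fun ω => ε ω i) μ)
    (hmean : ∀ i : Fin m, ∫ ω, ε ω i ∂μ = 0)
    (hint2 : ∀ i j : Fin m, Integrable (fun ω => ε ω i * ε ω j) μ)
    (hcov : ∀ i j : Fin m, ∫ ω, ε ω i * ε ω j ∂μ = if i = j then σ ^ 2 else 0)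
    (H : Matrix (Fin m) (Fin p) ℝ) (lam : ℝ) (hlam : 0 < lam) (θs : Fin p → ℝ)
    (y : Ω → Fin m → ℝ) (hy : ∀ ω, y ω = H *ᵥ θs + ε ω)
    (θhat : Ω → Fin p → ℝ)
    (hθhat : ∀ ω, θhat ω = (Hᵀ * H + lam • (1 : Matrix (Fin p) (Fin p) ℝ))⁻¹ *ᵥ (Hᵀ *ᵥ y ω)) :
    (∫ ω, ∑ i : Fin p, (θhat ω i - θs i) ^ 2 ∂μ) ≤
      σ ^ 2 * ((Hᵀ * H + lam • (1 : Matrix (Fin p) (Fin p) ℝ))⁻¹).trace +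
        lam ^ 2 * (∑ i : Fin p, θs i ^ 2) *
          ‖(Hᵀ * H + lam • (1 : Matrix (Fin p) (Fin p) ℝ))⁻¹‖ ^ 2 :=
  stmt_8_general μ ε σ hint hmean hint2 hcov H lam hlam θs y hy θhat hθhat
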